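/- Let Γ=(G,σ) be a signed graph on n vertices with nonnegative potential κ≥0. For all real numbers 1≤p≤q and every f∈S_q: 2^{−p}·R_p^σ(φ_{q,p}(f)) ≥ 2^{−q}·R_q^σ(f), and p·(R_p^σ(φ_{q,p}(f))/𝒟)^{1/p} ≤ q·(R_q^σ(f)/𝒟)^{1/q}, where 𝒟 = max_{1≤i≤n} (2κ_i + Σ_{j∼i} w_{ij})/(2μ_i). -/

import Mathlib

open Filter Topology Polynomial
open scoped Classical

noncomputable section

variable {V : Type} [Fintype V] [DecidableEq V]

/-- Sum of a (symmetric) summand over the unordered edges of `G`. -/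
def sgEdgeSum (G : SimpleGraph V) (F : V → V → ℝ) : ℝ :=
  (∑ i : V, ∑ j : V, if G.Adj i j then F i j else 0) / 2

/-- The Rayleigh quotient `R_p^σ` of the signed graph `p`-Laplacian with
edge weight `w`, signature `sgn`, vertex measure `μ` and potential `κ`. -/
def sgRayleigh (G : SimpleGraph V) (w sgn : V → V → ℝ) (μ κ : V → ℝ)
    (p : ℝ) (f : V → ℝ) : ℝ :=
  (sgEdgeSum G (fun i j => w i j * |f i - sgn i j * f j| ^ p) +
      ∑ i : V, κ i * |f i| ^ p) /
    ∑ i : V, μ i * |f i| ^ p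

/-- The unit sphere `S_p` of `ℓ^p(μ)`. -/
def pSphere (μ : V → ℝ) (p : ℝ) : Set (V → ℝ) :=
  {f | ∑ i : V, μ i * |f i| ^ p = 1}

/-- There is an odd continuous map from `B` into `ℝ^m ∖ {0}`. -/
def hasOddMapInto (B : Set (V → ℝ)) (m : ℕ) : Prop :=
  ∃ h : (V → ℝ) → (Fin m → ℝ),
    ContinuousOn h B ∧ (∀ x ∈ B, h x ≠ 0) ∧ (∀ x ∈ B, h (-x) = -(h x))

/-- The Krasnoselskii genus of `B` is at least `k`. -/
def genusGe (B : Set (V → ℝ)) (k : ℕ) : Prop :=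
  ∀ m, m < k → ¬ hasOddMapInto B m

/-- The family `F_k(S_p)` of closed symmetric subsets of the sphere `S_p`
with Krasnoselskii genus at least `k`. -/
def genusFamily (μ : V → ℝ) (p : ℝ) (k : ℕ) : Set (Set (V → ℝ)) :=
  {B | B ⊆ pSphere μ p ∧ IsClosed B ∧ (∀ x ∈ B, -x ∈ B) ∧ genusGe B k}

/-- The `k`-th variational eigenvalue `λ_k^{(p)}` of the signed graph `p`-Laplacian. -/
def varEig (G : SimpleGraph V) (w sgn : V → V → ℝ) (μ κ : V → ℝ)
    (p : ℝ) (k : ℕ) : ℝ :=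
  sInf ((fun B => sSup (sgRayleigh G w sgn μ κ p '' B)) '' genusFamily μ p k)

/-- The `k`-th smallest real root (1-indexed, counted with multiplicity) of the
characteristic polynomial of `A`; for a matrix with real spectrum this is the
`k`-th eigenvalue `λ_k(A)` in the ordering `λ_1 ≤ … ≤ λ_n`. -/
def eigval {m : Type} [Fintype m] [DecidableEq m] (A : Matrix m m ℝ) (k : ℕ) : ℝ :=
  (Multiset.sort A.charpoly.roots (· ≤ ·)).getD (k - 1) 0

/-- The normalized adjacency matrix `A^μ_{-Γ}` of the negation of the signed graph
`(H, sgn)` with edge weight `w` and vertex measure `μ`. -/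
def negAdj (H : SimpleGraph V) (w sgn : V → V → ℝ) (μ : V → ℝ) : Matrix V V ℝ :=
  fun i j => if H.Adj i j then -(sgn i j) * w i j / μ i else 0

/-- The normalized adjacency matrix `A^μ_{-Γ₀}` of the negation of the subgraph of
`(H, sgn)` with vertex set `s`, with restricted edge weight and vertex measure. -/
def negAdjSub (H : SimpleGraph V) (s : Finset V) (w sgn : V → V → ℝ) (μ : V → ℝ) :
    Matrix {x // x ∈ s} {x // x ∈ s} ℝ :=
  fun i j => if H.Adj ↑i ↑j then -(sgn ↑i ↑j) * w ↑i ↑j / μ ↑i else 0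

/-- The subgraph of `G` induced on the vertex set `s`. -/
def inducedGraph (G : SimpleGraph V) (s : Finset V) : SimpleGraph {x // x ∈ s} where
  Adj i j := G.Adj ↑i ↑j
  symm := ⟨fun _ _ h => G.symm.symm _ _ h⟩
  loopless := ⟨fun i h => G.loopless.irrefl ↑i h⟩

/-- `G` has an edge cover of cardinality `m`. -/
def edgeCoverCard {α : Type} (G : SimpleGraph α) (m : ℕ) : Prop :=
  ∃ C : Finset (Sym2 α), (C : Set (Sym2 α)) ⊆ G.edgeSet ∧
    (∀ v : α, ∃ e ∈ C, v ∈ e) ∧ C.card = m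

/-- The componentwise map `φ_{q,p} : S_q → S_p`, `φ_{q,p}(f)(i) = |f(i)|^{q/p} sign(f(i))`. -/
def phiMap (q p : ℝ) (f : V → ℝ) : V → ℝ :=
  fun i => |f i| ^ (q / p) * Real.sign (f i)

/-!
Put `α = q / p` and `g = φ_{q,p}(f)`. Then `|g i| ^ p = |f i| ^ q`, so `g ∈ S_p`, both
denominators are `1` and the potential terms of `R_p(g)` and `R_q(f)` coincide: only the edge
terms have to be compared, through the odd power `φ_α t = |t| ^ α sign t`.

For the first inequality, `|x - y| ^ α ≤ 2 ^ (α - 1) |φ_α x - φ_α y|` (superadditivity of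
`t ^ α` for arguments of equal sign, convexity for opposite signs), raised to the power `p`.

For the second, `|φ_α x - φ_α y| ≤ α ((|x| ^ q + |y| ^ q) / 2) ^ ((α - 1) / q) |x - y|`: for
equal signs by a Hermite–Hadamard bound for `t ^ (α - 1)` and the power-mean inequality, for
opposite signs since `2 ^ ((α - 1) / q) ≤ α`. Raising to the power `p` and applying Hölder's
inequality with exponents `1 / (1 - p / q)` and `q / p` to edges and vertices together gives
`R_p(g) ≤ α ^ p 𝒟 ^ (1 - p / q) R_q(f) ^ (p / q)`, because by the symmetry of `w` the
mean-value terms add up to at most `𝒟 ∑ μ i |f i| ^ q = 𝒟`.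
-/

open Finset

def signedRpow (α t : ℝ) : ℝ := |t| ^ α * Real.sign t

theorem signedRpow_neg (α t : ℝ) : signedRpow α (-t) = -signedRpow α t := by
  simp [signedRpow, Real.sign_neg]

theorem signedRpow_of_nonneg {α t : ℝ} (hα : α ≠ 0) (ht : 0 ≤ t) : signedRpow α t = t ^ α := by
  rcases ht.eq_or_lt with rfl | ht
  · simp [signedRpow, Real.zero_rpow hα]
  · simp [signedRpow, Real.sign_of_pos ht, abs_of_pos ht]

theorem signedRpow_neg_of_nonneg {α t : ℝ} (hα : α ≠ 0) (ht : 0 ≤ t) :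
    signedRpow α (-t) = -t ^ α := by
  rw [signedRpow_neg, signedRpow_of_nonneg hα ht]

theorem abs_signedRpow {α : ℝ} (hα : α ≠ 0) (t : ℝ) : |signedRpow α t| = |t| ^ α := by
  rcases le_total 0 t with ht | ht
  · rw [signedRpow_of_nonneg hα ht, abs_of_nonneg ht, abs_of_nonneg (by positivity)]
  · rw [← neg_neg t, signedRpow_neg_of_nonneg hα (neg_nonneg.2 ht), abs_neg, abs_neg,
      abs_of_nonneg (neg_nonneg.2 ht), abs_of_nonneg (Real.rpow_nonneg (neg_nonneg.2 ht) α)]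

theorem abs_phiMap_rpow {V : Type} {p q : ℝ} (hp : p ≠ 0) (hq : q ≠ 0) (f : V → ℝ) (i : V) :
    |phiMap q p f i| ^ p = |f i| ^ q := by
  change |signedRpow (q / p) (f i)| ^ p = _
  rw [abs_signedRpow (div_ne_zero hq hp), ← Real.rpow_mul (abs_nonneg _), div_mul_cancel₀ q hp]

theorem phiMap_sub_mul_phiMap {V : Type} {p q s : ℝ} (f : V → ℝ) (hs : s = 1 ∨ s = -1) (i j : V) :
    phiMap q p f i - s * phiMap q p f j =
      signedRpow (q / p) (f i) - signedRpow (q / p) (s * f j) := by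
  change signedRpow _ _ - s * signedRpow _ _ = _
  rcases hs with rfl | rfl <;> simp [signedRpow_neg]

theorem forall_pairs_of_nonneg {P : ℝ → ℝ → Prop} (symm : ∀ x y, P x y → P y x)
    (neg : ∀ x y, P x y → P (-x) (-y)) (same : ∀ a b, 0 ≤ b → b ≤ a → P a b)
    (opp : ∀ a b, 0 ≤ a → 0 ≤ b → P a (-b)) (x y : ℝ) : P x y := by
  wlog hyx : y ≤ x generalizing x y
  · exact symm _ _ (this y x (le_of_not_ge hyx))
  rcases le_total 0 y with hy | hy
  · exact same x y hy hyx
  rcases le_total 0 x with hx | hx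
  · simpa using opp x (-y) hx (neg_nonneg.2 hy)
  · simpa using neg _ _ (symm _ _ (same (-y) (-x) (neg_nonneg.2 hx) (neg_le_neg hyx)))

theorem abs_sub_rpow_le_two_rpow_mul {α : ℝ} (hα : 1 ≤ α) (x y : ℝ) :
    |x - y| ^ α ≤ 2 ^ (α - 1) * |signedRpow α x - signedRpow α y| := by
  have hα0 : α ≠ 0 := by linarith
  refine forall_pairs_of_nonneg (P := fun x y => |x - y| ^ α ≤
    2 ^ (α - 1) * |signedRpow α x - signedRpow α y|) ?_ ?_ ?_ ?_ x y
  · intro x y h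
    rwa [abs_sub_comm, abs_sub_comm (signedRpow α y)]
  · intro x y h
    rwa [signedRpow_neg, signedRpow_neg, neg_sub_neg, neg_sub_neg, abs_sub_comm y,
      abs_sub_comm (signedRpow α y)]
  · intro a b hb hba
    have hsuper : (a - b) ^ α + b ^ α ≤ a ^ α := by
      simpa using Real.add_rpow_le_rpow_add (sub_nonneg.2 hba) hb hα
    have hdiff : 0 ≤ a ^ α - b ^ α := by
      linarith [Real.rpow_nonneg (sub_nonneg.2 hba) α]
    rw [signedRpow_of_nonneg hα0 hb, signedRpow_of_nonneg hα0 (hb.trans hba),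
      abs_of_nonneg (sub_nonneg.2 hba), abs_of_nonneg hdiff]
    exact (le_mul_of_one_le_left hdiff (Real.one_le_rpow one_le_two (by linarith))).trans'
      (by linarith)
  · intro a b ha hb
    rw [signedRpow_of_nonneg hα0 ha, signedRpow_neg_of_nonneg hα0 hb, sub_neg_eq_add,
      sub_neg_eq_add, abs_of_nonneg (by positivity), abs_of_nonneg (by positivity)]
    lift a to NNReal using ha
    lift b to NNReal using hb
    exact_mod_cast NNReal.rpow_add_le_mul_rpow_add_rpow a b hα

theorem add_div_two_rpow_le {p a b : ℝ} (hp : 1 ≤ p) (ha : 0 ≤ a) (hb : 0 ≤ b) :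
    ((a + b) / 2) ^ p ≤ (a ^ p + b ^ p) / 2 := by
  have := (convexOn_rpow hp).2 ha hb (by norm_num : (0 : ℝ) ≤ 1 / 2)
    (by norm_num : (0 : ℝ) ≤ 1 / 2) (by norm_num)
  simp only [smul_eq_mul] at this
  rw [show (a + b) / 2 = 1 / 2 * a + 1 / 2 * b by ring]
  linarith

theorem add_rpow_div_two_le {r q a b : ℝ} (hr : 0 < r) (hrq : r ≤ q) (ha : 0 ≤ a) (hb : 0 ≤ b) :
    (a ^ r + b ^ r) / 2 ≤ ((a ^ q + b ^ q) / 2) ^ (r / q) := by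
  have hq : 0 < q := hr.trans_le hrq
  have hpow : ∀ c : ℝ, 0 ≤ c → (c ^ r) ^ (q / r) = c ^ q := fun c hc => by
    rw [← Real.rpow_mul hc, mul_div_cancel₀ _ hr.ne']
  have hmean := add_div_two_rpow_le ((one_le_div hr).2 hrq) (Real.rpow_nonneg ha r)
    (Real.rpow_nonneg hb r)
  rw [hpow a ha, hpow b hb] at hmean
  calc (a ^ r + b ^ r) / 2 = (((a ^ r + b ^ r) / 2) ^ (q / r)) ^ (r / q) := by
        rw [← Real.rpow_mul (by positivity), show q / r * (r / q) = 1 by field_simp, Real.rpow_one]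
    _ ≤ ((a ^ q + b ^ q) / 2) ^ (r / q) := by gcongr

theorem rpow_le_tangent {r m z : ℝ} (hr0 : 0 ≤ r) (hr1 : r ≤ 1) (hm : 0 < m) (hz : 0 ≤ z) :
    z ^ r ≤ m ^ r + r * m ^ (r - 1) * (z - m) := by
  have h := rpow_one_add_le_one_add_mul_self (s := (z - m) / m)
    (by rw [le_div_iff₀ hm]; linarith) hr0 hr1
  rw [show 1 + (z - m) / m = z / m by field_simp; ring, Real.div_rpow hz hm.le,
    div_le_iff₀ (by positivity)] at h
  rw [Real.rpow_sub_one hm.ne']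
  calc z ^ r ≤ (1 + r * ((z - m) / m)) * m ^ r := h
    _ = _ := by field_simp

theorem tangent_le_rpow {r m z : ℝ} (hr : 1 ≤ r) (hm : 0 < m) (hz : 0 ≤ z) :
    m ^ r + r * m ^ (r - 1) * (z - m) ≤ z ^ r := by
  have h := one_add_mul_self_le_rpow_one_add (s := (z - m) / m)
    (by rw [le_div_iff₀ hm]; linarith) hr
  rw [show 1 + (z - m) / m = z / m by field_simp; ring, Real.div_rpow hz hm.le,
    le_div_iff₀ (by positivity)] at h
  rw [Real.rpow_sub_one hm.ne']
  calc _ = (1 + r * ((z - m) / m)) * m ^ r := by field_simp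
    _ ≤ z ^ r := h

theorem le_of_hasDerivAt_nonneg {F F' : ℝ → ℝ} {a b : ℝ} (hab : a ≤ b)
    (hF : ContinuousOn F (Set.Icc a b)) (hF' : ∀ z ∈ Set.Ioo a b, HasDerivAt F (F' z) z)
    (hF'₀ : ∀ z ∈ Set.Ioo a b, 0 ≤ F' z) : F a ≤ F b := by
  refine monotoneOn_of_hasDerivWithinAt_nonneg (f' := F') (convex_Icc a b) hF (fun z hz => ?_)
    (fun z hz => ?_) ⟨le_rfl, hab⟩ ⟨hab, le_rfl⟩ hab <;> simp only [interior_Icc] at hz ⊢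
  exacts [(hF' z hz).hasDerivWithinAt, hF'₀ z hz]

-- Hermite–Hadamard for the concave function `t ↦ t ^ (α - 1)` on `[y, x]`.
theorem rpow_sub_rpow_le_of_le_two {α x y : ℝ} (hα1 : 1 ≤ α) (hα2 : α ≤ 2) (hy : 0 ≤ y)
    (hyx : y ≤ x) : x ^ α - y ^ α ≤ α * ((x + y) / 2) ^ (α - 1) * (x - y) := by
  have key := le_of_hasDerivAt_nonneg hyx
    (F := fun z => α * ((z + y) / 2) ^ (α - 1) * (z - y) - z ^ α)
    (F' := fun z => α * (1 / 2 * (α - 1) * ((z + y) / 2) ^ (α - 1 - 1)) * (z - y)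
      + α * ((z + y) / 2) ^ (α - 1) * 1 - α * z ^ (α - 1))
    (by fun_prop (disch := linarith))
    (fun z hz => ((((hasDerivAt_id z).add_const y).div_const 2).rpow_const (p := α - 1)
      (Or.inl (by linarith [hz.1] : 0 < (z + y) / 2).ne') |>.const_mul α |>.mul ((hasDerivAt_id z).sub_const y)
      |>.sub (Real.hasDerivAt_rpow_const (Or.inl (hy.trans_lt hz.1).ne'))))
    (fun z hz => by
      have ht := mul_le_mul_of_nonneg_left (rpow_le_tangent (r := α - 1) (m := (z + y) / 2)
        (by linarith) (by linarith) (by linarith [hz.1]) (hy.trans hz.1.le)) (by linarith : (0 : ℝ) ≤ α)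
      linarith)
  simp only [sub_self, mul_zero, zero_sub] at key
  linarith

-- Hermite–Hadamard for the convex function `t ↦ t ^ (α - 1)` on `[y, x]`.
theorem rpow_sub_rpow_le_of_two_le {α x y : ℝ} (hα : 2 ≤ α) (hy : 0 ≤ y) (hyx : y ≤ x) :
    x ^ α - y ^ α ≤ α * ((x ^ (α - 1) + y ^ (α - 1)) / 2) * (x - y) := by
  have key := le_of_hasDerivAt_nonneg hyx
    (F := fun z => α * ((z ^ (α - 1) + y ^ (α - 1)) / 2) * (z - y) - z ^ α)
    (F' := fun z => α * ((α - 1) * z ^ (α - 1 - 1) / 2) * (z - y)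
      + α * ((z ^ (α - 1) + y ^ (α - 1)) / 2) * 1 - α * z ^ (α - 1))
    (by fun_prop (disch := linarith))
    (fun z hz => (((Real.hasDerivAt_rpow_const (p := α - 1)
      (Or.inl (hy.trans_lt hz.1).ne')).add_const _).div_const 2 |>.const_mul α
      |>.mul ((hasDerivAt_id z).sub_const y)) |>.sub
      (Real.hasDerivAt_rpow_const (Or.inl (hy.trans_lt hz.1).ne')))
    (fun z hz => by
      have ht := mul_le_mul_of_nonneg_left (tangent_le_rpow (r := α - 1) (by linarith)
        (hy.trans_lt hz.1) hy) (by linarith : (0 : ℝ) ≤ α)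
      linarith)
  simp only [sub_self, mul_zero, zero_sub] at key
  linarith

theorem rpow_sub_rpow_le_mul_powerMean {α q a b : ℝ} (hα : 1 ≤ α) (hαq : α ≤ q) (hb : 0 ≤ b)
    (hba : b ≤ a) : a ^ α - b ^ α ≤ α * ((a ^ q + b ^ q) / 2) ^ ((α - 1) / q) * (a - b) := by
  have ha := hb.trans hba
  have hq : 0 < q := by linarith
  rcases le_total α 2 with hα2 | hα2
  · refine (rpow_sub_rpow_le_of_le_two hα hα2 hb hba).trans ?_
    have hmean : (a + b) / 2 ≤ ((a ^ q + b ^ q) / 2) ^ (1 / q) := by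
      simpa using add_rpow_div_two_le one_pos (by linarith) ha hb
    have hmid : ((a + b) / 2) ^ (α - 1) ≤ ((a ^ q + b ^ q) / 2) ^ ((α - 1) / q) := by
      calc _ ≤ (((a ^ q + b ^ q) / 2) ^ (1 / q)) ^ (α - 1) := by gcongr
        _ = _ := by rw [← Real.rpow_mul (by positivity)]; ring_nf
    gcongr
  · refine (rpow_sub_rpow_le_of_two_le hα2 hb hba).trans ?_
    gcongr
    exact add_rpow_div_two_le (by linarith) (by linarith) ha hb

theorem rpow_add_rpow_le_mul_powerMean {α q a b : ℝ} (hα : 1 ≤ α) (hαq : α ≤ q) (ha : 0 ≤ a)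
    (hb : 0 ≤ b) : a ^ α + b ^ α ≤ α * ((a ^ q + b ^ q) / 2) ^ ((α - 1) / q) * (a + b) := by
  have hq : 0 < q := by linarith
  set c := max a b
  set s := (α - 1) / q
  have hc : 0 ≤ c := le_max_of_le_left ha
  have hs0 : 0 ≤ s := div_nonneg (by linarith) hq.le
  have hs1 : s ≤ 1 := (div_le_one hq).2 (by linarith)
  have hpow : ∀ t, 0 ≤ t → t ≤ c → t ^ α ≤ c ^ (α - 1) * t := fun t ht htc => by
    calc t ^ α = t ^ (α - 1) * t := by rw [← Real.rpow_add_one' ht (by linarith), sub_add_cancel]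
      _ ≤ c ^ (α - 1) * t := by gcongr
  have hcq : c ^ q ≤ a ^ q + b ^ q := by
    rcases max_choice a b with h | h <;> simp only [c, h] <;>
      linarith [Real.rpow_nonneg ha q, Real.rpow_nonneg hb q]
  have hcs : c ^ (α - 1) ≤ 2 ^ s * ((a ^ q + b ^ q) / 2) ^ s := by
    rw [← Real.mul_rpow (by norm_num) (by positivity), mul_div_cancel₀ _ two_ne_zero]
    calc c ^ (α - 1) = (c ^ q) ^ s := by rw [← Real.rpow_mul hc]; congr 1; simp only [s]; field_simp
      _ ≤ (a ^ q + b ^ q) ^ s := by gcongr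
  have htwo : (2 : ℝ) ^ s ≤ α := by
    have := rpow_one_add_le_one_add_mul_self (s := 1) (by norm_num) hs0 hs1
    have : s ≤ α - 1 := div_le_self (by linarith) (by linarith)
    norm_num at *
    linarith
  calc a ^ α + b ^ α ≤ c ^ (α - 1) * (a + b) := by
        linarith [hpow a ha (le_max_left a b), hpow b hb (le_max_right a b)]
    _ ≤ 2 ^ s * ((a ^ q + b ^ q) / 2) ^ s * (a + b) := by gcongr
    _ ≤ α * ((a ^ q + b ^ q) / 2) ^ s * (a + b) := by gcongr

theorem abs_sub_signedRpow_le {α q : ℝ} (hα : 1 ≤ α) (hαq : α ≤ q) (x y : ℝ) :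
    |signedRpow α x - signedRpow α y| ≤
      α * ((|x| ^ q + |y| ^ q) / 2) ^ ((α - 1) / q) * |x - y| := by
  have hα0 : α ≠ 0 := by linarith
  refine forall_pairs_of_nonneg (P := fun x y => |signedRpow α x - signedRpow α y| ≤
      α * ((|x| ^ q + |y| ^ q) / 2) ^ ((α - 1) / q) * |x - y|) ?_ ?_ ?_ ?_ x y
  · intro x y h
    rwa [abs_sub_comm, abs_sub_comm y, add_comm]
  · intro x y h
    rwa [signedRpow_neg, signedRpow_neg, neg_sub_neg, neg_sub_neg, abs_neg, abs_neg,
      abs_sub_comm y, abs_sub_comm (signedRpow α y)]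
  · intro a b hb hba
    rw [signedRpow_of_nonneg hα0 hb, signedRpow_of_nonneg hα0 (hb.trans hba),
      abs_of_nonneg (hb.trans hba), abs_of_nonneg hb, abs_of_nonneg (sub_nonneg.2 hba),
      abs_of_nonneg (sub_nonneg.2 (Real.rpow_le_rpow hb hba (by linarith)))]
    exact rpow_sub_rpow_le_mul_powerMean hα hαq hb hba
  · intro a b ha hb
    rw [signedRpow_of_nonneg hα0 ha, signedRpow_neg_of_nonneg hα0 hb, sub_neg_eq_add,
      sub_neg_eq_add, abs_neg, abs_of_nonneg ha, abs_of_nonneg hb,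
      abs_of_nonneg (by positivity), abs_of_nonneg (by positivity)]
    exact rpow_add_rpow_le_mul_powerMean hα hαq ha hb

theorem abs_sub_rpow_le_two_rpow_mul_abs_sub_signedRpow_rpow {p q : ℝ} (hp : 0 < p)
    (hpq : p ≤ q) (x y : ℝ) :
    |x - y| ^ q ≤ 2 ^ (q - p) * |signedRpow (q / p) x - signedRpow (q / p) y| ^ p := by
  have h := abs_sub_rpow_le_two_rpow_mul ((one_le_div hp).2 hpq) x y
  have h' := Real.rpow_le_rpow (by positivity) h hp.le
  rwa [← Real.rpow_mul (abs_nonneg _), div_mul_cancel₀ q hp.ne',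
    Real.mul_rpow (by positivity) (abs_nonneg _), ← Real.rpow_mul zero_le_two,
    sub_mul, div_mul_cancel₀ q hp.ne', one_mul] at h'

theorem abs_sub_signedRpow_rpow_le {p q : ℝ} (hp : 1 ≤ p) (hpq : p ≤ q) (x y : ℝ) :
    |signedRpow (q / p) x - signedRpow (q / p) y| ^ p ≤
      (q / p) ^ p * (((|x| ^ q + |y| ^ q) / 2) ^ (1 - p / q) * (|x - y| ^ q) ^ (p / q)) := by
  have hp0 : 0 < p := by linarith
  have hq0 : 0 < q := by linarith
  have hαq : q / p ≤ q := div_le_self hq0.le hp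
  have h := Real.rpow_le_rpow (abs_nonneg _)
    (abs_sub_signedRpow_le ((one_le_div hp0).2 hpq) hαq x y) hp0.le
  rw [← Real.rpow_mul (abs_nonneg _), show q * (p / q) = p by field_simp, ← mul_assoc]
  rwa [Real.mul_rpow (by positivity) (abs_nonneg _), Real.mul_rpow (by positivity) (by positivity),
    ← Real.rpow_mul (by positivity), show (q / p - 1) / q * p = 1 - p / q by field_simp] at h

theorem sum_rpow_one_sub_mul_rpow_le {ι : Type*} (s : Finset ι) {u v : ι → ℝ}
    (hu : ∀ i ∈ s, 0 ≤ u i) (hv : ∀ i ∈ s, 0 ≤ v i) {t : ℝ} (ht0 : 0 ≤ t) (ht1 : t ≤ 1) :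
    ∑ i ∈ s, u i ^ (1 - t) * v i ^ t ≤ (∑ i ∈ s, u i) ^ (1 - t) * (∑ i ∈ s, v i) ^ t := by
  rcases ht0.eq_or_lt with rfl | ht0
  · simp
  rcases ht1.eq_or_lt with rfl | ht1
  · simp
  have h1t : 0 < 1 - t := by linarith
  have hpow : ∀ {a r : ℝ}, 0 ≤ a → 0 < r → (a ^ r) ^ (1 / r) = a := fun ha hr => by
    rw [← Real.rpow_mul ha, mul_one_div_cancel hr.ne', Real.rpow_one]
  have := Real.inner_le_Lp_mul_Lq_of_nonneg s (Real.holderConjugate_one_div h1t ht0 (by ring))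
    (f := fun i => u i ^ (1 - t)) (g := fun i => v i ^ t)
    (fun i hi => Real.rpow_nonneg (hu i hi) _) (fun i hi => Real.rpow_nonneg (hv i hi) _)
  simp only [one_div_one_div] at this
  rwa [sum_congr rfl fun i hi => hpow (hu i hi) h1t,
    sum_congr rfl fun i hi => hpow (hv i hi) ht0] at this

theorem rpow_one_sub_mul_rpow_add_le {a b c d t : ℝ} (ha : 0 ≤ a) (hb : 0 ≤ b) (hc : 0 ≤ c)
    (hd : 0 ≤ d) (ht0 : 0 ≤ t) (ht1 : t ≤ 1) :
    a ^ (1 - t) * b ^ t + c ^ (1 - t) * d ^ t ≤ (a + c) ^ (1 - t) * (b + d) ^ t := by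
  simpa [Fin.sum_univ_two] using sum_rpow_one_sub_mul_rpow_le univ (u := ![a, c]) (v := ![b, d])
    (by simp [Fin.forall_fin_two, ha, hc]) (by simp [Fin.forall_fin_two, hb, hd]) ht0 ht1

theorem mul_rpow_one_sub_mul_rpow {c a b : ℝ} (hc : 0 ≤ c) (ha : 0 ≤ a) (hb : 0 ≤ b) (t : ℝ) :
    c * (a ^ (1 - t) * b ^ t) = (c * a) ^ (1 - t) * (c * b) ^ t := by
  have hsplit : c = c ^ (1 - t) * c ^ t := by
    rw [← Real.rpow_add' hc (by norm_num), sub_add_cancel, Real.rpow_one]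
  rw [Real.mul_rpow hc ha, Real.mul_rpow hc hb]
  nth_rewrite 1 [hsplit]
  ring

theorem sum_mul_le_iSup_mul_sum {ι : Type*} [Fintype ι] (r m : ι → ℝ) (hm : ∀ i, 0 ≤ m i) :
    ∑ i, r i * m i ≤ (⨆ i, r i) * ∑ i, m i := by
  rw [mul_sum]
  exact sum_le_sum fun i _ =>
    mul_le_mul_of_nonneg_right (le_ciSup (Set.finite_range r).bddAbove i) (hm i)

section SignedGraph

variable {V : Type} [Fintype V] (G : SimpleGraph V)

theorem sgEdgeSum_eq_sum_filter (F : V → V → ℝ) :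
    sgEdgeSum G F = ∑ x ∈ univ.filter (fun x : V × V => G.Adj x.1 x.2), F x.1 x.2 / 2 := by
  rw [sgEdgeSum, sum_filter, ← univ_product_univ, sum_product, sum_div]
  simp only [sum_div, ite_div, zero_div]

theorem sgEdgeSum_mono {F F' : V → V → ℝ} (h : ∀ i j, G.Adj i j → F i j ≤ F' i j) :
    sgEdgeSum G F ≤ sgEdgeSum G F' := by
  rw [sgEdgeSum_eq_sum_filter, sgEdgeSum_eq_sum_filter]
  gcongr with x hx
  exact h _ _ (mem_filter.1 hx).2

theorem sgEdgeSum_nonneg {F : V → V → ℝ} (h : ∀ i j, G.Adj i j → 0 ≤ F i j) :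
    0 ≤ sgEdgeSum G F := by
  rw [sgEdgeSum_eq_sum_filter]
  exact sum_nonneg fun x hx => div_nonneg (h _ _ (mem_filter.1 hx).2) zero_le_two

theorem sgEdgeSum_const_mul (c : ℝ) (F : V → V → ℝ) :
    sgEdgeSum G (fun i j => c * F i j) = c * sgEdgeSum G F := by
  simp only [sgEdgeSum_eq_sum_filter, mul_sum, mul_div_assoc]

theorem sgEdgeSum_rpow_one_sub_mul_rpow_le {U W : V → V → ℝ}
    (hU : ∀ i j, G.Adj i j → 0 ≤ U i j) (hW : ∀ i j, G.Adj i j → 0 ≤ W i j) {t : ℝ}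
    (ht0 : 0 ≤ t) (ht1 : t ≤ 1) :
    sgEdgeSum G (fun i j => U i j ^ (1 - t) * W i j ^ t) ≤
      sgEdgeSum G U ^ (1 - t) * sgEdgeSum G W ^ t := by
  simp only [sgEdgeSum_eq_sum_filter]
  refine le_of_eq_of_le (sum_congr rfl fun x hx => ?_) (sum_rpow_one_sub_mul_rpow_le _
    (fun x hx => div_nonneg (hU _ _ (mem_filter.1 hx).2) zero_le_two)
    (fun x hx => div_nonneg (hW _ _ (mem_filter.1 hx).2) zero_le_two) ht0 ht1)
  simp only [div_eq_inv_mul]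
  exact mul_rpow_one_sub_mul_rpow (by norm_num) (hU _ _ (mem_filter.1 hx).2)
    (hW _ _ (mem_filter.1 hx).2) t

theorem sgEdgeSum_mul_add_div_two {w : V → V → ℝ} (hw : ∀ i j, w i j = w j i) (h : V → ℝ) :
    sgEdgeSum G (fun i j => w i j * ((h i + h j) / 2)) =
      ∑ i, (∑ j, if G.Adj i j then w i j else 0) * h i / 2 := by
  have hswap : ∑ i, ∑ j, (if G.Adj i j then w i j * h j else 0) =
      ∑ i, ∑ j, if G.Adj i j then w i j * h i else 0 := by
    rw [sum_comm]
    refine sum_congr rfl fun i _ => sum_congr rfl fun j _ => ?_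
    rw [G.adj_comm, hw]
  have hsplit : ∀ i j, (if G.Adj i j then w i j * ((h i + h j) / 2) else 0) =
      ((if G.Adj i j then w i j * h i else 0) + if G.Adj i j then w i j * h j else 0) / 2 := by
    intro i j
    split_ifs <;> ring
  simp only [sgEdgeSum, hsplit, ← sum_div, sum_add_distrib, hswap, sum_mul, ite_mul, zero_mul]
  ring

def sgDegreeBound (w : V → V → ℝ) (μ κ : V → ℝ) : ℝ :=
  ⨆ i : V, (2 * κ i + ∑ j : V, if G.Adj i j then w i j else 0) / (2 * μ i)

theorem sgDegreeBound_nonneg {w : V → V → ℝ} {μ κ : V → ℝ} (hw : ∀ i j, G.Adj i j → 0 ≤ w i j)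
    (hμ : ∀ i, 0 < μ i) (hκ : ∀ i, 0 ≤ κ i) : 0 ≤ sgDegreeBound G w μ κ := by
  refine Real.iSup_nonneg fun i => div_nonneg ?_ (mul_nonneg zero_le_two (hμ i).le)
  have : 0 ≤ ∑ j, if G.Adj i j then w i j else 0 :=
    sum_nonneg fun j _ => by split_ifs with h; exacts [hw i j h, le_rfl]
  linarith [hκ i]

theorem sgEdgeSum_add_sum_le_sgDegreeBound {w : V → V → ℝ} {μ κ : V → ℝ}
    (hw : ∀ i j, w i j = w j i) (hμ : ∀ i, 0 < μ i) {h : V → ℝ} (hh : ∀ i, 0 ≤ h i) :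
    sgEdgeSum G (fun i j => w i j * ((h i + h j) / 2)) + ∑ i, κ i * h i ≤
      sgDegreeBound G w μ κ * ∑ i, μ i * h i := by
  rw [sgEdgeSum_mul_add_div_two G hw, ← sum_add_distrib]
  refine le_of_eq_of_le (sum_congr rfl fun i _ => ?_)
    (sum_mul_le_iSup_mul_sum _ _ fun i => mul_nonneg (hμ i).le (hh i))
  field_simp [(hμ i).ne']
  ring

variable {w sgn : V → V → ℝ} {μ κ : V → ℝ} {p q : ℝ} {f : V → ℝ}

theorem sgRayleigh_nonneg (hw : ∀ i j, G.Adj i j → 0 ≤ w i j) (hμ : ∀ i, 0 ≤ μ i)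
    (hκ : ∀ i, 0 ≤ κ i) : 0 ≤ sgRayleigh G w sgn μ κ p f :=
  div_nonneg (add_nonneg (sgEdgeSum_nonneg G fun i j h => by have := hw i j h; positivity)
    (sum_nonneg fun i _ => by have := hκ i; positivity))
    (sum_nonneg fun i _ => by have := hμ i; positivity)

theorem sgRayleigh_of_mem_pSphere (hf : f ∈ pSphere μ p) :
    sgRayleigh G w sgn μ κ p f =
      sgEdgeSum G (fun i j => w i j * |f i - sgn i j * f j| ^ p) + ∑ i, κ i * |f i| ^ p := by
  rw [sgRayleigh, show ∑ i, μ i * |f i| ^ p = 1 from hf, div_one]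

theorem phiMap_mem_pSphere (hp : p ≠ 0) (hq : q ≠ 0) (hf : f ∈ pSphere μ q) :
    phiMap q p f ∈ pSphere μ p := by
  have hf' : ∑ i, μ i * |f i| ^ q = 1 := hf
  change ∑ i, μ i * |phiMap q p f i| ^ p = 1
  simpa only [abs_phiMap_rpow hp hq] using hf'

theorem sgRayleigh_phiMap (hp : p ≠ 0) (hq : q ≠ 0) (hf : f ∈ pSphere μ q) :
    sgRayleigh G w sgn μ κ p (phiMap q p f) =
      sgEdgeSum G (fun i j => w i j * |phiMap q p f i - sgn i j * phiMap q p f j| ^ p) +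
        ∑ i, κ i * |f i| ^ q := by
  simp only [sgRayleigh_of_mem_pSphere G (phiMap_mem_pSphere hp hq hf), abs_phiMap_rpow hp hq]

theorem sgRayleigh_le_two_rpow_mul_sgRayleigh_phiMap (hw : ∀ i j, G.Adj i j → 0 ≤ w i j)
    (hsgn : ∀ i j, G.Adj i j → sgn i j = 1 ∨ sgn i j = -1) (hκ : ∀ i, 0 ≤ κ i) (hp : 0 < p)
    (hpq : p ≤ q) (hf : f ∈ pSphere μ q) :
    sgRayleigh G w sgn μ κ q f ≤ 2 ^ (q - p) * sgRayleigh G w sgn μ κ p (phiMap q p f) := by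
  rw [sgRayleigh_of_mem_pSphere G hf, sgRayleigh_phiMap G hp.ne' (hp.trans_le hpq).ne' hf,
    mul_add, ← sgEdgeSum_const_mul]
  gcongr
  · refine sgEdgeSum_mono G fun i j hij => ?_
    rw [phiMap_sub_mul_phiMap f (hsgn i j hij), mul_left_comm]
    have := hw i j hij
    gcongr
    exact abs_sub_rpow_le_two_rpow_mul_abs_sub_signedRpow_rpow hp hpq _ _
  · exact le_mul_of_one_le_left (sum_nonneg fun i _ => by have := hκ i; positivity)
      (Real.one_le_rpow one_le_two (by linarith))

theorem sgEdgeSum_phiMap_le (hw : ∀ i j, G.Adj i j → 0 ≤ w i j)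
    (hsgn : ∀ i j, G.Adj i j → sgn i j = 1 ∨ sgn i j = -1) (hp : 1 ≤ p) (hpq : p ≤ q) :
    sgEdgeSum G (fun i j => w i j * |phiMap q p f i - sgn i j * phiMap q p f j| ^ p) ≤
      (q / p) ^ p *
        (sgEdgeSum G (fun i j => w i j * ((|f i| ^ q + |f j| ^ q) / 2)) ^ (1 - p / q) *
          sgEdgeSum G (fun i j => w i j * |f i - sgn i j * f j| ^ q) ^ (p / q)) := by
  have hq : 0 < q := by linarith
  have hedge : ∀ i j, G.Adj i j →
      w i j * |phiMap q p f i - sgn i j * phiMap q p f j| ^ p ≤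
        (q / p) ^ p * ((w i j * ((|f i| ^ q + |f j| ^ q) / 2)) ^ (1 - p / q) *
          (w i j * |f i - sgn i j * f j| ^ q) ^ (p / q)) := fun i j hij => by
    have hwij := hw i j hij
    have habs : |sgn i j * f j| = |f j| := by
      rcases hsgn i j hij with h | h <;> simp [h]
    rw [phiMap_sub_mul_phiMap f (hsgn i j hij),
      ← mul_rpow_one_sub_mul_rpow hwij (by positivity) (by positivity), mul_left_comm]
    gcongr
    simpa only [habs] using abs_sub_signedRpow_rpow_le hp hpq (f i) (sgn i j * f j)
  refine (sgEdgeSum_mono G hedge).trans ?_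
  rw [sgEdgeSum_const_mul]
  gcongr
  exact sgEdgeSum_rpow_one_sub_mul_rpow_le G (fun i j h => by have := hw i j h; positivity)
    (fun i j h => by have := hw i j h; positivity) (by positivity) ((div_le_one hq).2 hpq)

theorem sgRayleigh_phiMap_le (hw : ∀ i j, G.Adj i j → 0 ≤ w i j)
    (hwsymm : ∀ i j, w i j = w j i) (hsgn : ∀ i j, G.Adj i j → sgn i j = 1 ∨ sgn i j = -1)
    (hμ : ∀ i, 0 < μ i) (hκ : ∀ i, 0 ≤ κ i) (hp : 1 ≤ p) (hpq : p ≤ q) (hf : f ∈ pSphere μ q) :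
    sgRayleigh G w sgn μ κ p (phiMap q p f) ≤
      (q / p) ^ p * (sgDegreeBound G w μ κ ^ (1 - p / q) *
        sgRayleigh G w sgn μ κ q f ^ (p / q)) := by
  have hq : 0 < q := by linarith
  have ht0 : 0 ≤ p / q := by positivity
  have ht1 : p / q ≤ 1 := (div_le_one hq).2 hpq
  set B := sgEdgeSum G (fun i j => w i j * ((|f i| ^ q + |f j| ^ q) / 2))
  set E := sgEdgeSum G (fun i j => w i j * |f i - sgn i j * f j| ^ q)
  set K := ∑ i, κ i * |f i| ^ q
  have hB : 0 ≤ B := sgEdgeSum_nonneg G fun i j h => by have := hw i j h; positivity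
  have hE : 0 ≤ E := sgEdgeSum_nonneg G fun i j h => by have := hw i j h; positivity
  have hK : 0 ≤ K := sum_nonneg fun i _ => by have := hκ i; positivity
  have hBK : B + K ≤ sgDegreeBound G w μ κ := by
    have := sgEdgeSum_add_sum_le_sgDegreeBound G (κ := κ) hwsymm hμ
      (h := fun i => |f i| ^ q) fun i => by positivity
    rwa [show ∑ i, μ i * |f i| ^ q = 1 from hf, mul_one] at this
  have hKsplit : K = K ^ (1 - p / q) * K ^ (p / q) := by
    simpa using mul_rpow_one_sub_mul_rpow hK zero_le_one zero_le_one (p / q)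
  have hc : 1 ≤ (q / p) ^ p :=
    Real.one_le_rpow ((one_le_div (by linarith)).2 hpq) (by linarith)
  rw [sgRayleigh_phiMap G (by linarith) hq.ne' hf, sgRayleigh_of_mem_pSphere G hf]
  calc _ ≤ (q / p) ^ p * (B ^ (1 - p / q) * E ^ (p / q)) +
        (q / p) ^ p * (K ^ (1 - p / q) * K ^ (p / q)) :=
        add_le_add (sgEdgeSum_phiMap_le G hw hsgn hp hpq)
          (by rw [← hKsplit]; exact le_mul_of_one_le_left hK hc)
    _ ≤ (q / p) ^ p * ((B + K) ^ (1 - p / q) * (E + K) ^ (p / q)) := by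
        rw [← mul_add]
        gcongr
        exact rpow_one_sub_mul_rpow_add_le hB hE hK hK ht0 ht1
    _ ≤ _ := by gcongr

end SignedGraph

theorem mul_div_rpow_one_div_le {p q R S D : ℝ} (hp : 0 < p) (hq : 0 < q) (hR : 0 ≤ R)
    (hS : 0 ≤ S) (hD : 0 ≤ D) (h : R ≤ (q / p) ^ p * (D ^ (1 - p / q) * S ^ (p / q))) :
    p * (R / D) ^ (1 / p) ≤ q * (S / D) ^ (1 / q) := by
  rcases hD.eq_or_lt with rfl | hD
  · simp [Real.zero_rpow, hp.ne', hq.ne']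
  have h' : R / D ≤ (q / p) ^ p * (S / D) ^ (p / q) := by
    rw [Real.rpow_sub hD, Real.rpow_one] at h
    rw [div_le_iff₀ hD, Real.div_rpow hS hD.le]
    calc R ≤ _ := h
      _ = _ := by ring
  calc p * (R / D) ^ (1 / p) ≤ p * ((q / p) ^ p * (S / D) ^ (p / q)) ^ (1 / p) := by gcongr
    _ = q * (S / D) ^ (1 / q) := by
      rw [Real.mul_rpow (by positivity) (by positivity), ← Real.rpow_mul (by positivity),
        ← Real.rpow_mul (by positivity), mul_one_div_cancel hp.ne', Real.rpow_one,
        show p / q * (1 / p) = 1 / q by field_simp]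
      field_simp

theorem rayleigh_monotonicity_general
    {V : Type} [Fintype V]
    (G : SimpleGraph V) (w sgn : V → V → ℝ) (μ κ : V → ℝ)
    (hw : ∀ i j, G.Adj i j → 0 < w i j) (hwsymm : ∀ i j, w i j = w j i)
    (hsgn : ∀ i j, G.Adj i j → sgn i j = 1 ∨ sgn i j = -1)
    (hμ : ∀ i, 0 < μ i) (hκ : ∀ i, 0 ≤ κ i)
    (p q : ℝ) (hp : 1 ≤ p) (hpq : p ≤ q)
    (f : V → ℝ) (hf : f ∈ pSphere μ q) :
    (2 : ℝ) ^ (-q) * sgRayleigh G w sgn μ κ q f ≤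
      (2 : ℝ) ^ (-p) * sgRayleigh G w sgn μ κ p (phiMap q p f) ∧
    p * (sgRayleigh G w sgn μ κ p (phiMap q p f) /
        (⨆ i : V, (2 * κ i + ∑ j : V, if G.Adj i j then w i j else 0) / (2 * μ i))) ^ (1 / p)
      ≤ q * (sgRayleigh G w sgn μ κ q f /
        (⨆ i : V, (2 * κ i + ∑ j : V, if G.Adj i j then w i j else 0) / (2 * μ i))) ^ (1 / q) := by
  have hp0 : 0 < p := by linarith
  have hw' : ∀ i j, G.Adj i j → 0 ≤ w i j := fun i j h => (hw i j h).le
  have hμ' : ∀ i, 0 ≤ μ i := fun i => (hμ i).le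
  refine ⟨?_, ?_⟩
  · calc (2 : ℝ) ^ (-q) * sgRayleigh G w sgn μ κ q f
        ≤ 2 ^ (-q) * (2 ^ (q - p) * sgRayleigh G w sgn μ κ p (phiMap q p f)) := by
          gcongr
          exact sgRayleigh_le_two_rpow_mul_sgRayleigh_phiMap G hw' hsgn hκ hp0 hpq hf
      _ = 2 ^ (-p) * sgRayleigh G w sgn μ κ p (phiMap q p f) := by
          rw [← mul_assoc, ← Real.rpow_add two_pos]
          ring_nf
  · exact mul_div_rpow_one_div_le hp0 (hp0.trans_le hpq) (sgRayleigh_nonneg G hw' hμ' hκ)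
      (sgRayleigh_nonneg G hw' hμ' hκ) (sgDegreeBound_nonneg G hw' hμ hκ)
      (sgRayleigh_phiMap_le G hw' hwsymm hsgn hμ hκ hp hpq hf)

/-- **Monotonicity of Rayleigh quotients** (Lemma `lemma:RayMonotonicity`).
For a signed graph with nonnegative potential, `1 ≤ p ≤ q` and `f ∈ S_q`,
`2^{-p} R_p^σ(φ_{q,p}(f)) ≥ 2^{-q} R_q^σ(f)` and
`p (R_p^σ(φ_{q,p}(f))/𝒟)^{1/p} ≤ q (R_q^σ(f)/𝒟)^{1/q}`. -/
theorem rayleigh_monotonicity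
    {V : Type} [Fintype V] [DecidableEq V] (n : ℕ) (hn : Fintype.card V = n)
    (G : SimpleGraph V) (w sgn : V → V → ℝ) (μ κ : V → ℝ)
    (hw : ∀ i j, G.Adj i j → 0 < w i j) (hwsymm : ∀ i j, w i j = w j i)
    (hsgn : ∀ i j, G.Adj i j → sgn i j = 1 ∨ sgn i j = -1)
    (hsgnsymm : ∀ i j, sgn i j = sgn j i)
    (hμ : ∀ i, 0 < μ i) (hκ : ∀ i, 0 ≤ κ i)
    (p q : ℝ) (hp : 1 ≤ p) (hpq : p ≤ q)
    (f : V → ℝ) (hf : f ∈ pSphere μ q) :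
    (2 : ℝ) ^ (-q) * sgRayleigh G w sgn μ κ q f ≤
      (2 : ℝ) ^ (-p) * sgRayleigh G w sgn μ κ p (phiMap q p f) ∧
    p * (sgRayleigh G w sgn μ κ p (phiMap q p f) /
        (⨆ i : V, (2 * κ i + ∑ j : V, if G.Adj i j then w i j else 0) / (2 * μ i))) ^ (1 / p)
      ≤ q * (sgRayleigh G w sgn μ κ q f /
        (⨆ i : V, (2 * κ i + ∑ j : V, if G.Adj i j then w i j else 0) / (2 * μ i))) ^ (1 / q) :=
  rayleigh_monotonicity_general G w sgn μ κ hw hwsymm hsgn hμ hκ p q hp hpq f hf
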